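/- Let A be a finite abelian group, G a finite group, α : G → Aut(A) an action, and K = A ⋊_α G. For every class function f : G → ℂ and every g ∈ G, (Ind_G^K f)(1, g) = |{σ ∈ Â : g·σ = σ}| · f(g); that is, the restriction to G of the induced function Ind_G^K f equals the function g ↦ |Â(g)|·f(g), where Â(g) is the set of characters of A fixed by g. (This is the group case of Proposition 4.6(4).) -/
import Mathlib


namespace Stmt12

open scoped Classical in
/-- The function induced from a subgroup `H` of a finite group `K`:
`(Ind_H^K f)(k) = (1/|H|) · Σ_{t ∈ K, t k t⁻¹ ∈ H} f (t k t⁻¹)`. -/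
noncomputable def ind {K : Type*} [Group K] [Fintype K] (H : Subgroup K) (f : K → ℂ) :
    K → ℂ :=
  fun k => (1 / (Nat.card H : ℂ)) * ∑ t : K, if t * k * t⁻¹ ∈ H then f (t * k * t⁻¹) else 0

instance {A G : Type*} [Group A] [Fintype A] [Group G] [Fintype G] {α : G →* MulAut A} :
    Fintype (A ⋊[α] G) :=
  Fintype.ofEquiv (A × G)
    { toFun := fun p => ⟨p.1, p.2⟩
      invFun := fun x => (x.left, x.right)
      left_inv := fun _ => rfl
      right_inv := fun _ => rfl }

/-- Duality: a finite abelian group has as many `ℂˣ`-valued characters as elements. -/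
lemma card_hom (B : Type*) [CommGroup B] [Finite B] :
    Nat.card (B →* ℂˣ) = Nat.card B := by
  have : NeZero ((Monoid.exponent B : ℂ)) :=
    ⟨by exact_mod_cast Monoid.exponent_ne_zero_of_finite⟩
  obtain ⟨e⟩ := CommGroup.monoidHom_mulEquiv_of_hasEnoughRootsOfUnity B ℂ
  exact Nat.card_congr e.toEquiv

/-- The number of characters fixed by an automorphism equals the number of fixed points. -/
lemma card_fixed_char {A : Type*} [CommGroup A] [Finite A] (φ : MulAut A) :
    Nat.card {σ : A →* ℂˣ | ∀ b : A, σ (φ b) = σ b}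
      = Nat.card {a : A | φ a = a} := by
  let ψ : A →* A :=
    { toFun := fun a => φ a * a⁻¹
      map_one' := by simp
      map_mul' := fun a b => by
        simp only [map_mul, mul_inv]
        exact mul_mul_mul_comm _ _ _ _ }
  have hker : Nat.card {a : A | φ a = a} = Nat.card ψ.ker := by
    refine Nat.card_congr (Equiv.subtypeEquivRight fun a => ?_)
    simp [ψ, MonoidHom.mem_ker, mul_inv_eq_one]
  have hcond : ∀ σ : A →* ℂˣ, (∀ b : A, σ (φ b) = σ b) ↔ ∀ b : A, σ (ψ b) = 1 := by
    intro σ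
    refine forall_congr' fun b => ?_
    simp only [ψ, MonoidHom.coe_mk, OneHom.coe_mk, map_mul, map_inv, mul_inv_eq_one]
  let e : {σ : A →* ℂˣ | ∀ b : A, σ (φ b) = σ b} ≃ (A ⧸ ψ.range →* ℂˣ) :=
    { toFun := fun σ => QuotientGroup.lift ψ.range σ.1 (by
        rintro x ⟨b, rfl⟩
        exact (hcond σ.1).mp σ.2 b)
      invFun := fun τ => ⟨τ.comp (QuotientGroup.mk' ψ.range), by
        refine (hcond _).mpr fun b => ?_
        have h1 : ((ψ b : A) : A ⧸ ψ.range) = 1 := by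
          rw [QuotientGroup.eq_one_iff]
          exact ⟨b, rfl⟩
        simp [h1]⟩
      left_inv := fun σ => Subtype.ext (MonoidHom.ext fun a => rfl)
      right_inv := fun τ => MonoidHom.ext fun q => by
        induction q using QuotientGroup.induction_on
        rfl }
  have h1 : Nat.card {σ : A →* ℂˣ | ∀ b : A, σ (φ b) = σ b}
      = Nat.card (A ⧸ ψ.range) := by
    rw [Nat.card_congr e, card_hom]
  rw [h1, hker]
  have h2 : Nat.card (A ⧸ ψ.range) * Nat.card ψ.range = Nat.card A :=
    (Subgroup.card_eq_card_quotient_mul_card_subgroup ψ.range).symm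
  have h3 : Nat.card ψ.ker * Nat.card ψ.range = Nat.card A := by
    have h := Subgroup.card_eq_card_quotient_mul_card_subgroup ψ.ker
    have h4 : Nat.card (A ⧸ ψ.ker) = Nat.card ψ.range :=
      Nat.card_congr (QuotientGroup.quotientKerEquivRange ψ).toEquiv
    rw [h4] at h
    rw [mul_comm]
    exact h.symm
  exact Nat.eq_of_mul_eq_mul_right Nat.card_pos (h2.trans h3.symm)

lemma mem_range_inr {A G : Type*} [Group A] [Group G] {α : G →* MulAut A}
    (x : A ⋊[α] G) : x ∈ (SemidirectProduct.inr : G →* A ⋊[α] G).range ↔ x.left = 1 := by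
  constructor
  · rintro ⟨y, rfl⟩; rfl
  · intro h
    exact ⟨x.right, by ext <;> simp [h, SemidirectProduct.left_inr, SemidirectProduct.right_inr]⟩

/-- Proposition 4.6(4), group case: for a class function `f` on `G`, the restriction
to `G` of `Ind_G^K f` (for `K = A ⋊[α] G`) is the function
`g ↦ |Â(g)| · f(g)`, where `Â(g)` is the set of characters of `A` fixed by `g`. -/
theorem res_ind_from_G {A G : Type*} [CommGroup A] [Fintype A] [Group G] [Fintype G]
    (α : G →* MulAut A) (f : G → ℂ) (hf : ∀ s t : G, f (s * t * s⁻¹) = f t) :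
    ∀ g : G,
      ind (SemidirectProduct.inr : G →* A ⋊[α] G).range (fun x => f x.right) ⟨1, g⟩
        = (Nat.card {σ : A →* ℂˣ | ∀ b : A, σ ((α g⁻¹) b) = σ b} : ℂ) * f g := by
  classical
  intro g
  have hcardH : Nat.card (SemidirectProduct.inr : G →* A ⋊[α] G).range = Nat.card G :=
    (Nat.card_congr (MonoidHom.ofInjective SemidirectProduct.inr_injective).toEquiv).symm
  have hconj : ∀ a : A, ∀ s : G,
      (⟨a, s⟩ : A ⋊[α] G) * ⟨1, g⟩ * (⟨a, s⟩ : A ⋊[α] G)⁻¹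
        = ⟨a * α (s * g * s⁻¹) a⁻¹, s * g * s⁻¹⟩ := by
    intro a s
    ext
    · show a * (α s) 1 * (α (s * g)) ((α s⁻¹) a⁻¹) = a * α (s * g * s⁻¹) a⁻¹
      simp [map_mul, MulAut.mul_apply, mul_assoc]
    · show s * g * s⁻¹ = s * g * s⁻¹
      rfl
  -- the fixed-point count is independent of `s`
  have hgfix : ∀ a : A, α g a = a ↔ α g⁻¹ a = a := by
    intro a
    rw [map_inv]
    constructor
    · intro h; nth_rewrite 1 [← h]; exact (α g).symm_apply_apply a
    · intro h; nth_rewrite 1 [← h]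
      show (α g) ((α g).symm a) = a
      exact (α g).apply_symm_apply a
  have hfix : ∀ s : G,
      Nat.card {a : A | α (s * g * s⁻¹) a = a} = Nat.card {a : A | α g⁻¹ a = a} := by
    intro s
    have E1 : {a : A | α g a = a} ≃ {a : A | α (s * g * s⁻¹) a = a} := by
      refine Equiv.subtypeEquiv (α s).toEquiv fun a => ?_
      have key : α (s * g * s⁻¹) ((α s) a) = (α s) ((α g) a) := by
        rw [show α (s * g * s⁻¹) = α s * α g * (α s)⁻¹ by rw [map_mul, map_mul, map_inv]]
        simp only [MulAut.mul_apply, MulAut.inv_apply_self]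
      constructor
      · intro h
        show α (s * g * s⁻¹) ((α s) a) = (α s) a
        rw [key, h]
      · intro h
        have h' : α (s * g * s⁻¹) ((α s) a) = (α s) a := h
        rw [key] at h'
        exact (α s).injective h'
    have E2 : {a : A | α g a = a} ≃ {a : A | α g⁻¹ a = a} :=
      Equiv.subtypeEquivRight hgfix
    exact Nat.card_congr (E1.symm.trans E2)
  -- compute the sum
  set H := (SemidirectProduct.inr : G →* A ⋊[α] G).range
  let e : A × G ≃ A ⋊[α] G :=
    { toFun := fun p => ⟨p.1, p.2⟩
      invFun := fun x => (x.left, x.right)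
      left_inv := fun _ => rfl
      right_inv := fun _ => rfl }
  have hsum : ∑ t : A ⋊[α] G,
      (if t * ⟨1, g⟩ * t⁻¹ ∈ H then f ((t * ⟨1, g⟩ * t⁻¹).right) else 0)
      = (Nat.card G : ℂ) * ((Nat.card {a : A | α g⁻¹ a = a} : ℂ) * f g) := by
    rw [← Equiv.sum_comp e
      (fun t => if t * ⟨1, g⟩ * t⁻¹ ∈ H then f ((t * ⟨1, g⟩ * t⁻¹).right) else 0)]
    rw [Fintype.sum_prod_type_right]
    have hinner : ∀ s : G, ∑ a : A,
        (if (e (a, s)) * ⟨1, g⟩ * (e (a, s))⁻¹ ∈ H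
          then f (((e (a, s)) * ⟨1, g⟩ * (e (a, s))⁻¹).right) else 0)
        = (Nat.card {a : A | α g⁻¹ a = a} : ℂ) * f g := by
      intro s
      have hterm : ∀ a : A,
          (if (e (a, s)) * ⟨1, g⟩ * (e (a, s))⁻¹ ∈ H
            then f (((e (a, s)) * ⟨1, g⟩ * (e (a, s))⁻¹).right) else 0)
          = (if α (s * g * s⁻¹) a = a then f g else 0) := by
        intro a
        have he : e (a, s) = (⟨a, s⟩ : A ⋊[α] G) := rfl
        rw [he, hconj a s]
        have hm : (⟨a * α (s * g * s⁻¹) a⁻¹, s * g * s⁻¹⟩ : A ⋊[α] G) ∈ H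
            ↔ α (s * g * s⁻¹) a = a := by
          rw [mem_range_inr]
          show a * α (s * g * s⁻¹) a⁻¹ = 1 ↔ _
          rw [map_inv, mul_inv_eq_one, eq_comm]
        exact if_congr hm (hf s g) rfl
      rw [Finset.sum_congr rfl fun a _ => hterm a]
      rw [Finset.sum_ite, Finset.sum_const, Finset.sum_const_zero, add_zero, nsmul_eq_mul]
      congr 1
      rw [← hfix s]
      have : Nat.card {a : A | α (s * g * s⁻¹) a = a}
          = (Finset.univ.filter fun a : A => α (s * g * s⁻¹) a = a).card := by
        rw [Nat.card_eq_fintype_card]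
        exact Fintype.card_subtype _
      rw [this]
    rw [Finset.sum_congr rfl fun s _ => hinner s, Finset.sum_const, nsmul_eq_mul]
    simp [Nat.card_eq_fintype_card]
  show (1 / (Nat.card H : ℂ)) * _ = _
  beta_reduce
  have hsum' : (∑ t : A ⋊[α] G,
      @ite ℂ (t * (⟨1, g⟩ : A ⋊[α] G) * t⁻¹ ∈ H)
        (Classical.propDecidable _) (f ((t * ⟨1, g⟩ * t⁻¹).right)) 0)
      = (Nat.card G : ℂ) * ((Nat.card {a : A | α g⁻¹ a = a} : ℂ) * f g) :=
    (Finset.sum_congr rfl fun t _ => by congr).trans hsum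
  rw [hsum', hcardH]
  have hG : (Nat.card G : ℂ) ≠ 0 := by
    simp [Nat.card_eq_fintype_card, Fintype.card_ne_zero]
  rw [one_div, inv_mul_cancel_left₀ hG]
  congr 2
  exact (card_fixed_char (α g⁻¹)).symm

end Stmt12
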